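/- Let F be a finite field with q elements and T = Tr(F). Then every vertex of the commuting graph Γ(T) has degree exactly q^2 − q − 1; that is, Γ(T) is (q^2 − q − 1)-regular. -/

import Mathlib

open Matrix

/-- The ring of 2×2 upper triangular matrices over `R`. -/
def Tri (R : Type*) [CommRing R] : Subring (Matrix (Fin 2) (Fin 2) R) where
  carrier := {A | A 1 0 = 0}
  mul_mem' := by
    intro a b ha hb
    simp only [Set.mem_setOf_eq] at *
    simp [Matrix.mul_apply, Fin.sum_univ_two, ha, hb]
  one_mem' := by simp [Matrix.one_apply]
  add_mem' := by
    intro a b ha hb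
    simp_all [Matrix.add_apply]
  zero_mem' := by simp
  neg_mem' := by
    intro a ha
    simp_all

/-- The commuting graph of a ring `T`: vertices are the noncentral elements,
two distinct vertices are adjacent iff they commute. -/
def commGraph (T : Type*) [Ring T] : SimpleGraph {x : T // x ∉ Set.center T} where
  Adj a b := a ≠ b ∧ (a : T) * b = b * a
  symm := by
    constructor
    rintro a b ⟨h1, h2⟩
    exact ⟨h1.symm, h2.symm⟩
  loopless := by constructor; rintro a ⟨h, _⟩; exact h rfl

/-! For `A = [[a, b], [0, d]]`, commuting with `A` is the single linear condition
`(a - d) y = b (x - z)` on `B = [[x, y], [0, z]]`, nontrivial when `A` is not scalar. Hence the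
centralizer of a noncentral `A` is `F + F A`, of size `q²`, while the centre is `F`, of size `q`.
A neighbour of `A` is an element of the centralizer that is neither central nor `A` itself,
which leaves `q² - q - 1` of them. -/

lemma commGraph_card_neighborSet_add {T : Type*} [Ring T] [Finite T]
    (v : {x : T // x ∉ Set.center T}) :
    Nat.card ((commGraph T).neighborSet v) + Nat.card (Set.center T) + 1 =
      Nat.card (Set.centralizer {(v : T)}) := by
  have himage : Subtype.val '' (commGraph T).neighborSet v =
      Set.centralizer {(v : T)} \ insert (v : T) (Set.center T) := by
    ext x
    simp only [Set.mem_image, SimpleGraph.mem_neighborSet, commGraph, Set.mem_sdiff,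
      Set.mem_insert_iff, Set.mem_centralizer_iff, Set.mem_singleton_iff, forall_eq]
    constructor
    · rintro ⟨w, ⟨hne, hcomm⟩, rfl⟩
      exact ⟨hcomm, by rintro (h | h); exacts [hne (Subtype.ext h.symm), w.2 h]⟩
    · rintro ⟨hcomm, hx⟩
      exact ⟨⟨x, fun h => hx (Or.inr h)⟩, ⟨fun h => hx (Or.inl (congrArg Subtype.val h).symm),
        hcomm⟩, rfl⟩
  have hsub : insert (v : T) (Set.center T) ⊆ Set.centralizer {(v : T)} :=
    Set.insert_subset (by simp [Set.mem_centralizer_iff]) (Set.center_subset_centralizer _)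
  rw [← Nat.card_image_of_injective Subtype.val_injective, himage, Nat.card_coe_set_eq,
    Nat.card_coe_set_eq, Nat.card_coe_set_eq, add_assoc, ← Set.ncard_insert_of_notMem v.2,
    Set.ncard_sdiff_add_ncard_of_subset hsub]

lemma exists_mul_eq_of_mul_eq_mul {F : Type*} [Field F] {α β x y : F} (hαβ : α ≠ 0 ∨ β ≠ 0)
    (h : α * y = β * x) : ∃ b, b * α = x ∧ b * β = y := by
  rcases hαβ with hα | hβ
  · exact ⟨x / α, div_mul_cancel₀ x hα, by field_simp; linear_combination -h⟩
  · exact ⟨y / β, by field_simp; linear_combination h, div_mul_cancel₀ y hβ⟩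

namespace Tri

variable {F : Type*} [Field F]

def mk (a b d : F) : Tri F := ⟨!![a, b; 0, d], rfl⟩

@[simp] lemma apply_one_zero (A : Tri F) : A.1 1 0 = 0 := A.2

lemma ext_iff_entries {A B : Tri F} :
    A = B ↔ A.1 0 0 = B.1 0 0 ∧ A.1 0 1 = B.1 0 1 ∧ A.1 1 1 = B.1 1 1 := by
  refine ⟨by rintro rfl; exact ⟨rfl, rfl, rfl⟩, fun ⟨h00, h01, h11⟩ => Subtype.ext ?_⟩
  ext i j
  fin_cases i <;> fin_cases j <;> simp [h00, h01, h11]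

@[simp] lemma mul_apply_zero_zero (A B : Tri F) : (A.1 * B.1) 0 0 = A.1 0 0 * B.1 0 0 := by
  simp [Matrix.mul_apply]

@[simp] lemma mul_apply_zero_one (A B : Tri F) :
    (A.1 * B.1) 0 1 = A.1 0 0 * B.1 0 1 + A.1 0 1 * B.1 1 1 := by
  simp [Matrix.mul_apply]

@[simp] lemma mul_apply_one_one (A B : Tri F) : (A.1 * B.1) 1 1 = A.1 1 1 * B.1 1 1 := by
  simp [Matrix.mul_apply]

lemma commute_iff {A B : Tri F} :
    Commute A B ↔ (A.1 0 0 - A.1 1 1) * B.1 0 1 = A.1 0 1 * (B.1 0 0 - B.1 1 1) := by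
  rw [Commute, SemiconjBy, ext_iff_entries]
  simp only [MulMemClass.coe_mul, mul_apply_zero_zero, mul_apply_zero_one, mul_apply_one_one,
    mul_comm (A.1 0 0), mul_comm (A.1 1 1), true_and, and_true]
  constructor <;> intro h <;> linear_combination h

def scalar : F →+* Tri F :=
  (Matrix.scalar (Fin 2)).codRestrict (Tri F) fun a => show Matrix.scalar (Fin 2) a 1 0 = 0 by simp

@[simp] lemma scalar_apply_zero_zero (a : F) : (scalar a).1 0 0 = a := rfl
@[simp] lemma scalar_apply_zero_one (a : F) : (scalar a).1 0 1 = 0 := rfl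
@[simp] lemma scalar_apply_one_one (a : F) : (scalar a).1 1 1 = a := rfl

lemma mem_center_iff {A : Tri F} :
    A ∈ Set.center (Tri F) ↔ A.1 0 0 - A.1 1 1 = 0 ∧ A.1 0 1 = 0 := by
  rw [Semigroup.mem_center_iff]
  refine ⟨fun h => ⟨?_, ?_⟩, fun ⟨hd, h01⟩ B => (commute_iff.2 (by simp [hd, h01])).symm⟩
  · simpa [mk] using (commute_iff.1 (h (mk 0 1 0))).symm
  · simpa [mk] using commute_iff.1 (h (mk 1 0 0))

lemma notMem_center_iff {A : Tri F} :
    A ∉ Set.center (Tri F) ↔ A.1 0 0 - A.1 1 1 ≠ 0 ∨ A.1 0 1 ≠ 0 := by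
  rw [mem_center_iff, not_and_or]

lemma center_eq_range_scalar : Set.center (Tri F) = Set.range (scalar (F := F)) := by
  ext A
  refine ⟨fun hA => ⟨A.1 1 1, ?_⟩, by rintro ⟨a, rfl⟩; simp [mem_center_iff]⟩
  obtain ⟨hd, h01⟩ := mem_center_iff.1 hA
  simp [ext_iff_entries, h01, sub_eq_zero.1 hd]

lemma scalar_add_scalar_mul_eq_iff {A B : Tri F} {a b : F} :
    scalar a + scalar b * A = B ↔
      a + b * A.1 0 0 = B.1 0 0 ∧ b * A.1 0 1 = B.1 0 1 ∧ a + b * A.1 1 1 = B.1 1 1 := by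
  simp [ext_iff_entries]

lemma centralizer_singleton_eq_range {A : Tri F} (hA : A ∉ Set.center (Tri F)) :
    Set.centralizer {A} = Set.range fun p : F × F => scalar p.1 + scalar p.2 * A := by
  ext B
  simp only [Set.mem_centralizer_iff, Set.mem_singleton_iff, forall_eq]
  change Commute A B ↔ _
  rw [commute_iff]
  constructor
  · intro h
    obtain ⟨b, hb, hb'⟩ := exists_mul_eq_of_mul_eq_mul (notMem_center_iff.1 hA) h
    exact ⟨(B.1 1 1 - b * A.1 1 1, b),
      scalar_add_scalar_mul_eq_iff.2 ⟨by linear_combination hb, hb', by ring⟩⟩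
  · rintro ⟨⟨a, b⟩, rfl⟩
    obtain ⟨h00, h01, h11⟩ := scalar_add_scalar_mul_eq_iff.1 (rfl : scalar a + scalar b * A = _)
    rw [← h00, ← h01, ← h11]
    ring

lemma injective_scalar_add_scalar_mul {A : Tri F} (hA : A ∉ Set.center (Tri F)) :
    Function.Injective fun p : F × F => scalar p.1 + scalar p.2 * A := by
  rintro ⟨a, b⟩ ⟨a', b'⟩ h
  obtain ⟨h00, h01, h11⟩ := scalar_add_scalar_mul_eq_iff.1 h
  obtain ⟨e00, e01, e11⟩ := scalar_add_scalar_mul_eq_iff.1 (rfl : scalar a' + scalar b' * A = _)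
  have hb : b = b' := by
    rcases notMem_center_iff.1 hA with hd | hA01
    · exact mul_right_cancel₀ hd (by linear_combination h00 - h11 - e00 + e11)
    · exact mul_right_cancel₀ hA01 (by linear_combination h01 - e01)
  subst hb
  exact Prod.ext (by linear_combination h00 - e00) rfl

lemma card_center : Nat.card (Set.center (Tri F)) = Nat.card F := by
  rw [center_eq_range_scalar]
  exact Nat.card_range_of_injective (scalar (F := F)).injective

lemma card_centralizer_singleton {A : Tri F} (hA : A ∉ Set.center (Tri F)) :
    Nat.card (Set.centralizer {A}) = Nat.card F ^ 2 := by
  rw [centralizer_singleton_eq_range hA,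
    Nat.card_range_of_injective (injective_scalar_add_scalar_mul hA), Nat.card_prod, sq]

end Tri

/-- Theorem 2.9: the commuting graph of `Tri F` over a finite field `F` of
order `q` is `(q^2 - q - 1)`-regular: every vertex has exactly `q^2 - q - 1`
neighbours. -/
theorem commGraph_tri_field_regular {F : Type*} [Field F] [Fintype F] (q : ℕ)
    (hq : Fintype.card F = q) (v : {x : Tri F // x ∉ Set.center (Tri F)}) :
    Nat.card ((commGraph (Tri F)).neighborSet v) = q ^ 2 - q - 1 := by
  have h := commGraph_card_neighborSet_add v
  rw [Tri.card_center, Tri.card_centralizer_singleton v.2, Nat.card_eq_fintype_card (α := F),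
    hq] at h
  omega
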